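/- arXiv:1711.11560 — 2 statements merged into one kernel-verified Lean document; each statement's English description precedes it below -/
import Mathlib

section
/- There exists an absolute constant C > 0 such that for every real λ ≥ 0 and all integers a, b ≥ 2, with g(k) := k·√(min(k,a)·min(k,b))·1{k ≥ 4}, one has E_λ[g] ≥ C · min( λ·√(min(λ,a)·min(λ,b)), λ⁴ ). -/
/-!
For `λ ≤ 6` the term `k = 4` alone gives `E_λ[g] ≥ e^{-6} λ⁴ / 3`, since `g 4 ≥ 8` when `a, b ≥ 2`.
For `λ ≥ 6` put `s = √(min(λ,a) min(λ,b))`. From `min(k,λ) min(λ,c) ≤ λ min(k,c)` and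
`k min(k,λ) 1{k ≥ 4} ≥ λk - λ²/4 - 9` one gets the affine minorant
`g k ≥ s (k - λ/4 - 9/λ)`, whose Poisson expectation is `s (3λ/4 - 9/λ) ≥ λ s / 2`.
-/

/-- Expectation of `f` under a Poisson distribution with parameter `lam`. -/
noncomputable def poissonE (lam : ℝ) (f : ℕ → ℝ) : ℝ :=
  ∑' k : ℕ, Real.exp (-lam) * lam ^ k / (Nat.factorial k) * f k

open Real

noncomputable def poissonWeight (lam : ℝ) (k : ℕ) : ℝ :=
  exp (-lam) * lam ^ k / (Nat.factorial k)

namespace poissonWeight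

variable {lam : ℝ}

lemma nonneg (hlam : 0 ≤ lam) (k : ℕ) : 0 ≤ poissonWeight lam k := by
  unfold poissonWeight; positivity

variable (lam)

lemma hasSum : HasSum (poissonWeight lam) 1 := by
  have h := (NormedSpace.expSeries_div_hasSum_exp lam).mul_left (exp (-lam))
  rw [← Real.exp_eq_exp_ℝ, ← exp_add, neg_add_cancel, exp_zero] at h
  have e : poissonWeight lam = fun k => exp (-lam) * (lam ^ k / k.factorial) :=
    funext fun k => mul_div_assoc _ _ _
  rwa [e]

lemma succ_mul_eq (k : ℕ) :
    poissonWeight lam (k + 1) * ((k : ℝ) + 1) = lam * poissonWeight lam k := by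
  simp only [poissonWeight, Nat.factorial_succ]
  push_cast
  field_simp
  ring

lemma hasSum_mul_cast : HasSum (fun k : ℕ => poissonWeight lam k * k) lam := by
  rw [← hasSum_nat_add_iff' 1]
  simpa [succ_mul_eq] using (hasSum lam).mul_left lam

lemma hasSum_mul_affine (α β : ℝ) :
    HasSum (fun k : ℕ => poissonWeight lam k * (α * (k - β))) (α * (lam - β)) := by
  have h := ((hasSum_mul_cast lam).mul_left α).sub ((hasSum lam).mul_left (α * β))
  rw [mul_one, ← mul_sub] at h
  have e : (fun k : ℕ => poissonWeight lam k * (α * (k - β))) =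
      fun k => α * (poissonWeight lam k * k) - α * β * poissonWeight lam k := by
    funext k
    ring
  rwa [e]

end poissonWeight

section poissonE

variable {lam : ℝ} {f : ℕ → ℝ}

lemma summable_poissonWeight_mul_of_le_mul_cast (hlam : 0 ≤ lam) {c : ℝ}
    (hf₀ : ∀ k, 0 ≤ f k) (hf : ∀ k, f k ≤ c * k) :
    Summable (fun k => poissonWeight lam k * f k) :=
  ((poissonWeight.hasSum_mul_cast lam).summable.mul_left c).of_nonneg_of_le
    (fun k => mul_nonneg (poissonWeight.nonneg hlam k) (hf₀ k))
    (fun k => by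
      simpa only [mul_left_comm] using
        mul_le_mul_of_nonneg_left (hf k) (poissonWeight.nonneg hlam k))

lemma poissonWeight_mul_le_poissonE (hlam : 0 ≤ lam) (hf₀ : ∀ k, 0 ≤ f k)
    (hf : Summable (fun k => poissonWeight lam k * f k)) (n : ℕ) :
    poissonWeight lam n * f n ≤ poissonE lam f :=
  hf.le_tsum n fun k _ => mul_nonneg (poissonWeight.nonneg hlam k) (hf₀ k)

lemma affine_le_poissonE (hlam : 0 ≤ lam) (hf : Summable (fun k => poissonWeight lam k * f k))
    {α β : ℝ} (hle : ∀ k : ℕ, α * (k - β) ≤ f k) :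
    α * (lam - β) ≤ poissonE lam f :=
  hasSum_le (fun k => mul_le_mul_of_nonneg_left (hle k) (poissonWeight.nonneg hlam k))
    (poissonWeight.hasSum_mul_affine lam α β) hf.hasSum

end poissonE

lemma min_mul_min_le_mul_min {x y c : ℝ} (hx : 0 ≤ x) (hy : 0 ≤ y) (hc : 0 ≤ c) :
    min x y * min y c ≤ y * min x c := by
  rcases le_total x y with hxy | hyx
  · rw [min_eq_left hxy]
    rcases le_total x c with hxc | hcx
    · rw [min_eq_left hxc, mul_comm]
      exact mul_le_mul_of_nonneg_right (min_le_left y c) hx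
    · rw [min_eq_right hcx]
      nlinarith [min_le_right y c]
  · rw [min_eq_right hyx]
    exact mul_le_mul_of_nonneg_left (min_le_min_right c hyx) hy

lemma min_mul_sqrt_min_le {x y a b : ℝ} (hx : 0 ≤ x) (hy : 0 ≤ y) (ha : 0 ≤ a) (hb : 0 ≤ b) :
    min x y * √(min y a * min y b) ≤ y * √(min x a * min x b) := by
  have hxy : 0 ≤ min x y := le_min hx hy
  have hsq : min x y ^ 2 * (min y a * min y b) ≤ y ^ 2 * (min x a * min x b) :=
    calc min x y ^ 2 * (min y a * min y b)
        = (min x y * min y a) * (min x y * min y b) := by ring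
      _ ≤ (y * min x a) * (y * min x b) :=
        mul_le_mul (min_mul_min_le_mul_min hx hy ha) (min_mul_min_le_mul_min hx hy hb)
          (mul_nonneg hxy (le_min hy hb)) (mul_nonneg hy (le_min hx ha))
      _ = y ^ 2 * (min x a * min x b) := by ring
  calc min x y * √(min y a * min y b) = √(min x y ^ 2 * (min y a * min y b)) := by
        rw [sqrt_mul (sq_nonneg _), sqrt_sq hxy]
    _ ≤ √(y ^ 2 * (min x a * min x b)) := sqrt_le_sqrt hsq
    _ = y * √(min x a * min x b) := by rw [sqrt_mul (sq_nonneg _), sqrt_sq hy]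

lemma affine_le_mul_min_indicator (lam : ℝ) (k : ℕ) :
    lam * k - (lam ^ 2 / 4 + 9) ≤ (k : ℝ) * min (k : ℝ) lam * (if 4 ≤ k then 1 else 0) := by
  split_ifs with hk
  · rcases le_total (k : ℝ) lam with hkl | hlk
    · rw [min_eq_left hkl]
      nlinarith [sq_nonneg ((k : ℝ) - lam / 2)]
    · rw [min_eq_right hlk]
      nlinarith
  · have hk3 : (k : ℝ) ≤ 3 := by exact_mod_cast (by omega : k ≤ 3)
    nlinarith [sq_nonneg (lam / 2 - 3)]

noncomputable def profile (a b : ℝ) (k : ℕ) : ℝ :=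
  (k : ℝ) * √(min (k : ℝ) a * min (k : ℝ) b) * (if 4 ≤ k then 1 else 0)

section profile

variable {a b : ℝ}

lemma profile_nonneg (k : ℕ) : 0 ≤ profile a b k := by
  unfold profile
  split_ifs <;> positivity

lemma profile_le_mul_cast (ha : 0 ≤ a) (hb : 0 ≤ b) (k : ℕ) :
    profile a b k ≤ √(a * b) * k := by
  have hsqrt : √(min (k : ℝ) a * min (k : ℝ) b) ≤ √(a * b) :=
    sqrt_le_sqrt (mul_le_mul (min_le_right _ _) (min_le_right _ _)
      (le_min k.cast_nonneg hb) ha)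
  unfold profile
  split_ifs
  · nlinarith [k.cast_nonneg (α := ℝ)]
  · simp only [mul_zero]; positivity

lemma eight_le_profile_four (ha : 2 ≤ a) (hb : 2 ≤ b) : 8 ≤ profile a b 4 := by
  have h4 : (4 : ℝ) ≤ min 4 a * min 4 b := by
    nlinarith [le_min (show (2 : ℝ) ≤ 4 by norm_num) ha, le_min (show (2 : ℝ) ≤ 4 by norm_num) hb]
  have h2 : (2 : ℝ) ≤ √(min 4 a * min 4 b) := le_sqrt_of_sq_le (by linarith)
  simp only [profile, Nat.cast_ofNat, le_refl, if_true]
  linarith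

lemma affine_le_profile (ha : 0 ≤ a) (hb : 0 ≤ b) {lam : ℝ} (hlam : 0 < lam) (k : ℕ) :
    √(min lam a * min lam b) * (k - (lam / 4 + 9 / lam)) ≤ profile a b k := by
  set s := √(min lam a * min lam b)
  have hind : lam * k - (lam ^ 2 / 4 + 9) ≤ (k : ℝ) * min (k : ℝ) lam * (if 4 ≤ k then 1 else 0) :=
    affine_le_mul_min_indicator lam k
  have hsqrt := min_mul_sqrt_min_le k.cast_nonneg hlam.le ha hb
  rw [← mul_le_mul_iff_of_pos_left hlam]
  calc lam * (s * (k - (lam / 4 + 9 / lam))) = s * (lam * k - (lam ^ 2 / 4 + 9)) := by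
        field_simp
    _ ≤ s * ((k : ℝ) * min (k : ℝ) lam * (if 4 ≤ k then 1 else 0)) :=
        mul_le_mul_of_nonneg_left hind (sqrt_nonneg _)
    _ ≤ lam * profile a b k := by
        unfold profile
        split_ifs
        · nlinarith [k.cast_nonneg (α := ℝ)]
        · simp

end profile

section poissonE_profile

variable {lam a b : ℝ}

lemma summable_poissonWeight_mul_profile (hlam : 0 ≤ lam) (ha : 0 ≤ a) (hb : 0 ≤ b) :
    Summable (fun k => poissonWeight lam k * profile a b k) :=
  summable_poissonWeight_mul_of_le_mul_cast hlam profile_nonneg (profile_le_mul_cast ha hb)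

lemma exp_neg_six_div_three_mul_pow_four_le_poissonE_profile (hlam : 0 ≤ lam) (hlam6 : lam ≤ 6)
    (ha : 2 ≤ a) (hb : 2 ≤ b) :
    exp (-6) / 3 * lam ^ 4 ≤ poissonE lam (profile a b) := by
  have hexp : exp (-6) ≤ exp (-lam) := exp_le_exp.mpr (by linarith)
  calc exp (-6) / 3 * lam ^ 4 ≤ exp (-lam) * lam ^ 4 / 24 * 8 := by
        nlinarith [pow_nonneg hlam 4]
    _ ≤ poissonWeight lam 4 * profile a b 4 := by
        unfold poissonWeight
        gcongr
        · norm_num [Nat.factorial]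
        · exact eight_le_profile_four ha hb
    _ ≤ poissonE lam (profile a b) :=
        poissonWeight_mul_le_poissonE hlam profile_nonneg
          (summable_poissonWeight_mul_profile hlam (by linarith) (by linarith)) 4

lemma mul_sqrt_div_two_le_poissonE_profile (hlam : 6 ≤ lam) (ha : 0 ≤ a) (hb : 0 ≤ b) :
    lam * √(min lam a * min lam b) / 2 ≤ poissonE lam (profile a b) := by
  have hlam0 : 0 < lam := by linarith
  have h9 : 9 / lam ≤ lam / 4 := by
    rw [div_le_div_iff₀ hlam0 (by norm_num)]
    nlinarith
  calc lam * √(min lam a * min lam b) / 2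
      ≤ √(min lam a * min lam b) * (lam - (lam / 4 + 9 / lam)) := by
        nlinarith [sqrt_nonneg (min lam a * min lam b)]
    _ ≤ poissonE lam (profile a b) :=
        affine_le_poissonE hlam0.le (summable_poissonWeight_mul_profile hlam0.le ha hb)
          (affine_le_profile ha hb hlam0)

end poissonE_profile

theorem stmt5 : ∃ C : ℝ, 0 < C ∧ ∀ (lam : ℝ) (a b : ℤ), 0 ≤ lam → 2 ≤ a → 2 ≤ b →
    poissonE lam (fun k => (k : ℝ) * Real.sqrt (min (k : ℝ) (a : ℝ) * min (k : ℝ) (b : ℝ)) *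
        (if 4 ≤ k then 1 else 0))
    ≥ C * min (lam * Real.sqrt (min lam (a : ℝ) * min lam (b : ℝ))) (lam ^ 4) := by
  refine ⟨exp (-6) / 3, by positivity, fun lam a b hlam ha hb => ?_⟩
  have ha' : (2 : ℝ) ≤ a := by exact_mod_cast ha
  have hb' : (2 : ℝ) ≤ b := by exact_mod_cast hb
  have hC : exp (-6) / 3 ≤ 1 / 2 := by
    have : exp (-6) ≤ 1 := exp_le_one_iff.mpr (by norm_num)
    linarith
  change poissonE lam (profile a b) ≥ _
  set s := √(min lam (a : ℝ) * min lam (b : ℝ))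
  rcases le_total lam 6 with hlam6 | hlam6
  · calc exp (-6) / 3 * min (lam * s) (lam ^ 4) ≤ exp (-6) / 3 * lam ^ 4 := by
          gcongr
          exact min_le_right _ _
      _ ≤ poissonE lam (profile a b) :=
          exp_neg_six_div_three_mul_pow_four_le_poissonE_profile hlam hlam6 ha' hb'
  · calc exp (-6) / 3 * min (lam * s) (lam ^ 4) ≤ 1 / 2 * (lam * s) := by
          gcongr
          exact min_le_left _ _
      _ = lam * s / 2 := by ring
      _ ≤ poissonE lam (profile a b) :=
          mul_sqrt_div_two_le_poissonE_profile hlam6 (by linarith) (by linarith)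
end

section
/- Let Q ∈ ℝ[X_1,…,X_n] be homogeneous of degree d, let N ≥ d, and let p be a probability distribution on [n]. Then the expectation over an N-sample from p of (U_N Q(Φ))² equals ∑_{s ∈ ℕⁿ, max(0, 2d−N) ≤ |s| ≤ d} p^s · ( (∂^{|s|}Q/∂X^s)(p) )² · (N−d)!² / ( N! · (N − 2d + |s|)! · ∏_{i=1}^n s_i! ), where Φ is the fingerprint of the N-sample (the terms with |s| < 2d − N vanish). -/
/-!
Write `φ^{(α)} = ∏ i, (φ i)_{(α i)}` with falling factorials `(x)_{(a)} = x.descFactorial a`;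
then `U_N Q (φ) = (N-d)!/N! · ∑ c_α φ^{(α)}`. The fingerprint of an `N`-sample has falling
factorial moments `E[Φ^{(m)}] = N_{(|m|)} p^m`, by induction on `N` from
`(x+1)_{(m)} = (x)_{(m)} + m (x)_{(m-1)}`. Squaring `U_N Q` and linearising each product with
`(x)_{(a)} (x)_{(b)} = ∑_k C(a,k) C(b,k) k! (x)_{(a+b-k)}` turns `E[(U_N Q)²]` into a sum over
`k` of such moments. Since `∂^k Q (p) = ∑ c_α (α)_{(k)} p^{α-k}` and `|α| = |β| = d`, the `k`-th
term is `N_{(2d-|k|)} p^k (∂^k Q (p))² / k!`, which vanishes unless `2d - N ≤ |k| ≤ d`.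
-/

open Finset

/-- The fingerprint of a sample tuple: the count of occurrences of each element. -/
def fingerprint {N n : ℕ} (s : Fin N → Fin n) : Fin n → ℕ :=
  fun i => (Finset.univ.filter fun j => s j = i).card

/-- The unbiased estimator `U_N Q` for a (homogeneous degree-`d`) polynomial `Q`,
evaluated at a fingerprint `φ`. -/
noncomputable def estU {n : ℕ} (N d : ℕ) (Q : MvPolynomial (Fin n) ℝ)
    (φ : Fin n → ℕ) : ℝ :=
  ∑ α ∈ Q.support, Q.coeff α *
    (((N - d).factorial : ℝ) * ∏ i, ((α i).factorial : ℝ)) / (N.factorial : ℝ) *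
    ∏ i, ((φ i).choose (α i) : ℝ)

/-- The iterated formal partial derivative `∏ i (∂/∂X_i)^(s i)` applied to `Q`. -/
noncomputable def iterPderiv {n : ℕ} (s : Fin n → ℕ)
    (Q : MvPolynomial (Fin n) ℝ) : MvPolynomial (Fin n) ℝ :=
  (List.finRange n).foldr
    (fun i acc => (((MvPolynomial.pderiv i).toLinearMap) ^ (s i)) acc) Q

namespace Nat

theorem succ_descFactorial_eq_add (x m : ℕ) :
    (x + 1).descFactorial m = x.descFactorial m + m * x.descFactorial (m - 1) := by
  cases m with
  | zero => simp
  | succ m =>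
    rw [succ_descFactorial_succ, descFactorial_succ, Nat.add_sub_cancel]
    rcases le_or_gt m x with h | h
    · nth_rewrite 1 [show x + 1 = x - m + (m + 1) by omega]
      ring
    · simp [descFactorial_eq_zero_iff_lt.mpr h]

theorem sub_mul_descFactorial (x b m : ℕ) (hbm : b ≤ m) :
    (x - b) * x.descFactorial m = x.descFactorial (m + 1) + (m - b) * x.descFactorial m := by
  rw [descFactorial_succ]
  rcases le_or_gt m x with h | h
  · rw [show x - b = x - m + (m - b) by omega, Nat.add_mul]
  · simp [descFactorial_eq_zero_iff_lt.mpr h]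

theorem descFactorial_mul_descFactorial_eq_sum (x a b : ℕ) :
    x.descFactorial a * x.descFactorial b =
      ∑ k ∈ range (a + 1), a.choose k * b.choose k * k ! * x.descFactorial (a + b - k) := by
  induction b with
  | zero => simp [sum_range_succ', Nat.choose_zero_succ]
  | succ b ih =>
    have hsplit : ∀ k ∈ range (a + 1),
        (x - b) * (a.choose k * b.choose k * k ! * x.descFactorial (a + b - k)) =
          a.choose k * b.choose k * k ! * x.descFactorial (a + b + 1 - k) +
            a.choose k * (a - k) * k ! * b.choose k * x.descFactorial (a + b - k) := by
      intro k hk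
      have hka : k ≤ a := by have := mem_range.mp hk; omega
      rw [show a + b + 1 - k = a + b - k + 1 by omega, mul_left_comm (x - b),
        sub_mul_descFactorial x b _ (by omega), show a + b - k - b = a - k by omega]
      ring
    have hshift : ∑ k ∈ range (a + 1), a.choose k * (a - k) * k ! * b.choose k *
          x.descFactorial (a + b - k) =
        ∑ j ∈ range a, a.choose (j + 1) * b.choose j * (j + 1)! *
          x.descFactorial (a + b + 1 - (j + 1)) := by
      rw [sum_range_succ, Nat.sub_self, mul_zero, zero_mul, zero_mul, zero_mul, add_zero]
      refine sum_congr rfl fun j _ => ?_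
      rw [show a + b + 1 - (j + 1) = a + b - j by omega, factorial_succ,
        ← choose_succ_right_eq]
      ring
    rw [descFactorial_succ, mul_left_comm, ih, mul_sum, sum_congr rfl hsplit, sum_add_distrib,
      hshift, sum_range_succ' _ a, sum_range_succ' (fun k => a.choose k * (b + 1).choose k * _ * _)]
    simp only [choose_succ_succ', choose_zero_right, factorial_zero]
    rw [add_right_comm, ← sum_add_distrib]
    congr 1
    refine sum_congr rfl fun j _ => ?_
    rw [← add_assoc]
    ring

end Nat

theorem prod_descFactorial_mul_prod_descFactorial {ι : Type*} [Fintype ι] [DecidableEq ι]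
    (φ a b : ι → ℕ) (D : ℕ) (ha : ∀ i, a i ≤ D) :
    (∏ i, (φ i).descFactorial (a i)) * ∏ i, (φ i).descFactorial (b i) =
      ∑ k : ι → Fin (D + 1), (∏ i, (a i).choose (k i) * (b i).choose (k i) * (k i : ℕ).factorial) *
        ∏ i, (φ i).descFactorial (a i + b i - k i) := by
  simp only [← prod_mul_distrib]
  rw [← Fintype.prod_sum fun i (k : Fin (D + 1)) =>
    (a i).choose k * (b i).choose k * (k : ℕ).factorial * (φ i).descFactorial (a i + b i - k)]
  refine prod_congr rfl fun i _ => ?_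
  rw [Nat.descFactorial_mul_descFactorial_eq_sum, Fin.sum_univ_eq_sum_range
    (fun k => (a i).choose k * (b i).choose k * k.factorial * (φ i).descFactorial (a i + b i - k))]
  refine sum_subset (range_subset_range.mpr (by have := ha i; omega)) fun k _ hk => ?_
  rw [Nat.choose_eq_zero_of_lt (by simpa using hk), zero_mul, zero_mul, zero_mul]

theorem fingerprint_cons {n N : ℕ} (a : Fin n) (s : Fin N → Fin n) :
    fingerprint (Fin.cons a s : Fin (N + 1) → Fin n) =
      Function.update (fingerprint s) a (fingerprint s a + 1) := by
  funext i
  simp only [fingerprint, card_filter, Fin.sum_univ_succ, Fin.cons_zero, Fin.cons_succ,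
    Function.update_apply]
  split_ifs <;> simp_all [add_comm]

theorem prod_descFactorial_update_succ {ι R : Type*} [Fintype ι] [DecidableEq ι]
    [CommSemiring R] (φ m : ι → ℕ) (a : ι) :
    ∏ i, ((Function.update φ a (φ a + 1) i).descFactorial (m i) : R) =
      ∏ i, ((φ i).descFactorial (m i) : R) +
        m a * ∏ i, ((φ i).descFactorial (Function.update m a (m a - 1) i) : R) := by
  have hφ : ∏ i ∈ {a}ᶜ, ((Function.update φ a (φ a + 1) i).descFactorial (m i) : R) =
      ∏ i ∈ {a}ᶜ, ((φ i).descFactorial (m i) : R) :=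
    prod_congr rfl fun i hi => by rw [Function.update_of_ne (by simpa using hi)]
  have hm : ∏ i ∈ {a}ᶜ, ((φ i).descFactorial (Function.update m a (m a - 1) i) : R) =
      ∏ i ∈ {a}ᶜ, ((φ i).descFactorial (m i) : R) :=
    prod_congr rfl fun i hi => by rw [Function.update_of_ne (by simpa using hi)]
  rw [Fintype.prod_eq_mul_prod_compl a, hφ, Fintype.prod_eq_mul_prod_compl a,
    Fintype.prod_eq_mul_prod_compl a (fun i => ((φ i).descFactorial _ : R)), hm]
  simp only [Function.update_self, Nat.succ_descFactorial_eq_add]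
  push_cast
  ring

theorem sum_pi_fin_succ {α M : Type*} [Fintype α] [AddCommMonoid M] {N : ℕ}
    (f : (Fin (N + 1) → α) → M) :
    ∑ s, f s = ∑ a, ∑ s : Fin N → α, f (Fin.cons a s) := by
  rw [← (Fin.consEquiv fun _ => α).sum_comp, Fintype.sum_prod_type]
  rfl

theorem sum_update_pred {ι : Type*} [Fintype ι] [DecidableEq ι] (m : ι → ℕ) {a : ι}
    (ha : m a ≠ 0) : ∑ i, Function.update m a (m a - 1) i = ∑ i, m i - 1 := by
  rw [Fintype.sum_eq_add_sum_compl a, Fintype.sum_eq_add_sum_compl a m, Function.update_self,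
    sum_congr rfl fun i hi => Function.update_of_ne (by simpa using hi) _ m]
  omega

theorem mul_prod_pow_update_pred {ι M : Type*} [Fintype ι] [DecidableEq ι] [CommMonoid M]
    (p : ι → M) (m : ι → ℕ) {a : ι} (ha : m a ≠ 0) :
    p a * ∏ i, p i ^ Function.update m a (m a - 1) i = ∏ i, p i ^ m i := by
  rw [Fintype.prod_eq_mul_prod_compl a, Fintype.prod_eq_mul_prod_compl a (fun i => p i ^ m i),
    Function.update_self, ← mul_assoc, ← pow_succ',
    Nat.sub_add_cancel (Nat.one_le_iff_ne_zero.mpr ha),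
    prod_congr rfl fun i hi => by rw [Function.update_of_ne (by simpa using hi)]]

theorem sum_prod_mul_prod_descFactorial_fingerprint {n : ℕ} {R : Type*} [CommSemiring R]
    (p : Fin n → R) (hp : ∑ i, p i = 1) (N : ℕ) (m : Fin n → ℕ) :
    ∑ s : Fin N → Fin n, (∏ j, p (s j)) * ∏ i, ((fingerprint s i).descFactorial (m i) : R) =
      N.descFactorial (∑ i, m i) * ∏ i, p i ^ m i := by
  induction N generalizing m with
  | zero =>
    simp only [fingerprint, univ_eq_empty, filter_empty, card_empty]
    by_cases hm : ∀ i, m i = 0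
    · simp [hm]
    · obtain ⟨i, hi⟩ := not_forall.mp hm
      have hle : m i ≤ ∑ j, m j := single_le_sum (fun _ _ => Nat.zero_le _) (mem_univ i)
      rw [prod_eq_zero (mem_univ i) (by rw [Nat.descFactorial_eq_zero_iff_lt.mpr (by omega)]; simp),
        Nat.descFactorial_eq_zero_iff_lt.mpr (by omega)]
      simp
  | succ N ih =>
    have hstep : ∀ (a : Fin n) (s : Fin N → Fin n),
        (∏ j, p ((Fin.cons a s : Fin (N + 1) → Fin n) j)) *
            ∏ i, ((fingerprint (Fin.cons a s : Fin (N + 1) → Fin n) i).descFactorial (m i) : R) =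
          p a * ((∏ j, p (s j)) * ∏ i, ((fingerprint s i).descFactorial (m i) : R)) +
            m a * p a * ((∏ j, p (s j)) *
              ∏ i, ((fingerprint s i).descFactorial (Function.update m a (m a - 1) i) : R)) := by
      intro a s
      rw [Fin.prod_univ_succ, fingerprint_cons, prod_descFactorial_update_succ]
      simp only [Fin.cons_zero, Fin.cons_succ]
      ring
    have hpred : ∀ a, (m a : R) * p a *
          (N.descFactorial (∑ i, Function.update m a (m a - 1) i) *
            ∏ i, p i ^ Function.update m a (m a - 1) i) =
        m a * (N.descFactorial (∑ i, m i - 1) * ∏ i, p i ^ m i) := by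
      intro a
      by_cases ha : m a = 0
      · simp [ha]
      · rw [sum_update_pred m ha, ← mul_prod_pow_update_pred p m ha]
        ring
    simp only [sum_pi_fin_succ, hstep, sum_add_distrib, ← mul_sum, ih, hpred]
    rw [← sum_mul, ← sum_mul, hp, Nat.succ_descFactorial_eq_add]
    push_cast
    ring

theorem sum_mul_prod_descFactorial_mul_prod_descFactorial_fingerprint {n : ℕ} {R : Type*}
    [CommSemiring R] (p : Fin n → R) (hp : ∑ i, p i = 1) (N D : ℕ) (a b : Fin n → ℕ)
    (ha : ∀ i, a i ≤ D) :
    ∑ s : Fin N → Fin n, (∏ j, p (s j)) *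
        ((∏ i, ((fingerprint s i).descFactorial (a i) : R)) *
          ∏ i, ((fingerprint s i).descFactorial (b i) : R)) =
      ∑ k : Fin n → Fin (D + 1),
        ((∏ i, (a i).choose (k i) * (b i).choose (k i) * (k i : ℕ).factorial : ℕ) : R) *
          (N.descFactorial (∑ i, (a i + b i - k i)) * ∏ i, p i ^ (a i + b i - k i)) := by
  have hprod : ∀ s : Fin N → Fin n,
      (∏ i, ((fingerprint s i).descFactorial (a i) : R)) *
          ∏ i, ((fingerprint s i).descFactorial (b i) : R) =
        ∑ k : Fin n → Fin (D + 1),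
          ((∏ i, (a i).choose (k i) * (b i).choose (k i) * (k i : ℕ).factorial : ℕ) : R) *
            ∏ i, ((fingerprint s i).descFactorial (a i + b i - k i) : R) := by
    intro s
    have h := congrArg (Nat.cast (R := R))
      (prod_descFactorial_mul_prod_descFactorial (fingerprint s) a b D ha)
    push_cast at h ⊢
    exact h
  simp only [hprod, mul_sum]
  rw [sum_comm]
  refine sum_congr rfl fun k _ => ?_
  rw [← sum_prod_mul_prod_descFactorial_fingerprint p hp N, mul_sum]
  exact sum_congr rfl fun s _ => mul_left_comm _ _ _

section Pderiv

open MvPolynomial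

variable {σ R : Type*} [CommSemiring R]

theorem pow_pderiv_monomial (i : σ) (k : ℕ) (α : σ →₀ ℕ) (c : R) :
    ((pderiv i).toLinearMap ^ k) (monomial α c) =
      monomial (α - Finsupp.single i k) ((α i).descFactorial k * c) := by
  induction k with
  | zero => simp
  | succ k ih =>
    rw [pow_succ', Module.End.mul_apply, ih, Derivation.coeFn_coe, pderiv_monomial,
      tsub_tsub, ← Finsupp.single_add, Finsupp.tsub_apply, Finsupp.single_eq_same,
      Nat.descFactorial_succ]
    push_cast
    ring_nf

theorem list_prod_pow_pderiv_monomial [DecidableEq σ] (k : σ → ℕ) (l : List σ) (hl : l.Nodup)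
    (α : σ →₀ ℕ) (c : R) :
    (l.map fun i => (pderiv i).toLinearMap ^ k i).prod (monomial α c) =
      monomial (α - (l.map fun i => Finsupp.single i (k i)).sum)
        ((l.map fun i => ((α i).descFactorial (k i) : R)).prod * c) := by
  induction l with
  | nil => simp
  | cons i l ih =>
    obtain ⟨hi, hl⟩ := List.nodup_cons.mp hl
    have hσ : (l.map fun j => Finsupp.single j (k j)).sum i = 0 := by
      rw [← Finsupp.applyAddHom_apply, map_list_sum, List.map_map]
      refine List.sum_eq_zero fun x hx => ?_
      obtain ⟨j, hj, rfl⟩ := List.mem_map.mp hx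
      simp [show j ≠ i from fun h => hi (h ▸ hj)]
    rw [List.map_cons, List.prod_cons, Module.End.mul_apply, ih hl, pow_pderiv_monomial,
      Finsupp.tsub_apply, hσ, Nat.sub_zero, tsub_tsub, List.map_cons, List.sum_cons, add_comm,
      List.map_cons, List.prod_cons, mul_assoc]

end Pderiv

theorem MvPolynomial.IsHomogeneous.sum_eq_of_mem_support {σ R : Type*} [Fintype σ]
    [CommSemiring R] {Q : MvPolynomial σ R} {d : ℕ} (hQ : Q.IsHomogeneous d) {α : σ →₀ ℕ}
    (hα : α ∈ Q.support) : ∑ i, α i = d := by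
  rw [← Finsupp.degree_eq_sum, Finsupp.degree_apply, ← hQ.degree_eq_sum_deg_support hα]

section IterPderiv

open MvPolynomial

variable {n : ℕ}

theorem iterPderiv_eq_list_prod (s : Fin n → ℕ) (Q : MvPolynomial (Fin n) ℝ) :
    iterPderiv s Q = ((List.finRange n).map fun i => (pderiv i).toLinearMap ^ s i).prod Q := by
  unfold iterPderiv
  induction List.finRange n with
  | nil => rfl
  | cons i l ih => rw [List.foldr_cons, ih, List.map_cons, List.prod_cons, Module.End.mul_apply]

theorem iterPderiv_monomial (s : Fin n → ℕ) (α : Fin n →₀ ℕ) (c : ℝ) :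
    iterPderiv s (monomial α c) =
      monomial (α - Finsupp.equivFunOnFinite.symm s)
        ((∏ i, ((α i).descFactorial (s i) : ℝ)) * c) := by
  rw [iterPderiv_eq_list_prod, list_prod_pow_pderiv_monomial _ _ (List.nodup_finRange n),
    Finsupp.equivFunOnFinite_symm_eq_sum, Fin.sum_univ_def, Fin.prod_univ_def]

theorem eval_iterPderiv (s : Fin n → ℕ) (Q : MvPolynomial (Fin n) ℝ) (p : Fin n → ℝ) :
    eval p (iterPderiv s Q) =
      ∑ α ∈ Q.support, Q.coeff α * ∏ i, ((α i).descFactorial (s i) * p i ^ (α i - s i)) := by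
  conv_lhs => rw [Q.as_sum, iterPderiv_eq_list_prod, map_sum, map_sum]
  refine sum_congr rfl fun α _ => ?_
  rw [← iterPderiv_eq_list_prod, iterPderiv_monomial, eval_monomial, Finsupp.prod_fintype _ _
    (fun _ => pow_zero _), prod_mul_distrib]
  simp only [Finsupp.tsub_apply, Finsupp.equivFunOnFinite_symm_apply_apply]
  ring

theorem eval_iterPderiv_eq_zero_of_lt {Q : MvPolynomial (Fin n) ℝ} {d : ℕ}
    (hQ : Q.IsHomogeneous d) (s : Fin n → ℕ) (hs : d < ∑ i, s i) (p : Fin n → ℝ) :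
    eval p (iterPderiv s Q) = 0 := by
  rw [eval_iterPderiv]
  refine sum_eq_zero fun α hα => ?_
  obtain ⟨i, hi⟩ : ∃ i, α i < s i := by
    by_contra! h
    have := sum_le_sum fun i (_ : i ∈ univ) => h i
    rw [hQ.sum_eq_of_mem_support hα] at this
    omega
  rw [prod_eq_zero (mem_univ i) (by rw [Nat.descFactorial_eq_zero_iff_lt.mpr hi]; simp), mul_zero]

end IterPderiv

theorem estU_eq_sum_descFactorial {n : ℕ} (N d : ℕ) (Q : MvPolynomial (Fin n) ℝ) (φ : Fin n → ℕ) :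
    estU N d Q φ = (N - d).factorial / N.factorial *
      ∑ α ∈ Q.support, Q.coeff α * ∏ i, ((φ i).descFactorial (α i) : ℝ) := by
  rw [estU, mul_sum]
  refine sum_congr rfl fun α _ => ?_
  simp only [Nat.descFactorial_eq_factorial_mul_choose, Nat.cast_mul, prod_mul_distrib]
  ring

theorem factorial_mul_choose_mul_choose_mul_factorial_mul_pow {R : Type*} [CommSemiring R]
    (a b k : ℕ) (x : R) :
    (k.factorial : R) * ((a.choose k * b.choose k * k.factorial : ℕ) * x ^ (a + b - k)) =
      x ^ k * ((a.descFactorial k * x ^ (a - k)) * (b.descFactorial k * x ^ (b - k))) := by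
  by_cases h : k ≤ a ∧ k ≤ b
  · rw [show a + b - k = k + (a - k) + (b - k) by omega, Nat.descFactorial_eq_factorial_mul_choose,
      Nat.descFactorial_eq_factorial_mul_choose]
    push_cast
    ring
  · rcases not_and_or.mp h with h | h <;> rw [not_le] at h <;>
      simp [Nat.choose_eq_zero_of_lt h, Nat.descFactorial_eq_zero_iff_lt.mpr h]

theorem factorial_mul_weight_mul_moment_eq {n : ℕ} (N d : ℕ) (p : Fin n → ℝ) (α β k : Fin n → ℕ)
    (hα : ∑ i, α i = d) (hβ : ∑ i, β i = d) :
    (∏ i, ((k i).factorial : ℝ)) *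
        (((∏ i, (α i).choose (k i) * (β i).choose (k i) * (k i).factorial : ℕ) : ℝ) *
          (N.descFactorial (∑ i, (α i + β i - k i)) * ∏ i, p i ^ (α i + β i - k i))) =
      N.descFactorial (2 * d - ∑ i, k i) * (∏ i, p i ^ k i) *
        ((∏ i, ((α i).descFactorial (k i) * p i ^ (α i - k i) : ℝ)) *
          ∏ i, ((β i).descFactorial (k i) * p i ^ (β i - k i) : ℝ)) := by
  have hcoord := prod_congr rfl fun i (_ : i ∈ univ) =>
    factorial_mul_choose_mul_choose_mul_factorial_mul_pow (α i) (β i) (k i) (p i)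
  calc _ = N.descFactorial (∑ i, (α i + β i - k i)) * ∏ i, ((k i).factorial : ℝ) *
        (((α i).choose (k i) * (β i).choose (k i) * (k i).factorial : ℕ) *
          p i ^ (α i + β i - k i)) := by
        rw [Nat.cast_prod]
        simp only [prod_mul_distrib]
        ring
    _ = N.descFactorial (2 * d - ∑ i, k i) * ∏ i, ((k i).factorial : ℝ) *
        (((α i).choose (k i) * (β i).choose (k i) * (k i).factorial : ℕ) *
          p i ^ (α i + β i - k i)) := by
        by_cases h : ∀ i, k i ≤ α i ∧ k i ≤ β i
        · rw [sum_tsub_distrib _ fun i _ => le_add_right (h i).1, sum_add_distrib, hα, hβ]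
          congr 3
          omega
        · obtain ⟨i, hi⟩ := not_forall.mp h
          rw [prod_eq_zero (mem_univ i), mul_zero, mul_zero]
          rcases not_and_or.mp hi with h | h <;> simp [Nat.choose_eq_zero_of_lt (not_le.mp h)]
    _ = _ := by
        rw [hcoord]
        simp only [prod_mul_distrib]
        ring

theorem sum_mul_estU_sq {n : ℕ} (N d : ℕ) (Q : MvPolynomial (Fin n) ℝ) (p : Fin n → ℝ) :
    ∑ s : Fin N → Fin n, (∏ j, p (s j)) * estU N d Q (fingerprint s) ^ 2 =
      ((N - d).factorial / N.factorial : ℝ) ^ 2 * ∑ α ∈ Q.support, ∑ β ∈ Q.support,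
        Q.coeff α * Q.coeff β * ∑ s : Fin N → Fin n, (∏ j, p (s j)) *
          ((∏ i, ((fingerprint s i).descFactorial (α i) : ℝ)) *
            ∏ i, ((fingerprint s i).descFactorial (β i) : ℝ)) := by
  have hpoint : ∀ s : Fin N → Fin n, (∏ j, p (s j)) * estU N d Q (fingerprint s) ^ 2 =
      ((N - d).factorial / N.factorial : ℝ) ^ 2 * ∑ α ∈ Q.support, ∑ β ∈ Q.support,
        Q.coeff α * Q.coeff β * ((∏ j, p (s j)) *
          ((∏ i, ((fingerprint s i).descFactorial (α i) : ℝ)) *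
            ∏ i, ((fingerprint s i).descFactorial (β i) : ℝ))) := by
    intro s
    rw [estU_eq_sum_descFactorial, mul_pow, sq (∑ α ∈ Q.support, _), sum_mul_sum, mul_left_comm]
    congr 1
    simp only [mul_sum]
    exact sum_congr rfl fun α _ => sum_congr rfl fun β _ => by ring
  simp only [hpoint, ← mul_sum]
  congr 1
  rw [sum_comm]
  refine sum_congr rfl fun α _ => ?_
  rw [sum_comm]
  exact sum_congr rfl fun β _ => (mul_sum _ _ _).symm

open MvPolynomial in
theorem sum_sum_coeff_mul_coeff_mul_moment {n d : ℕ} {Q : MvPolynomial (Fin n) ℝ}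
    (hQ : Q.IsHomogeneous d) (N : ℕ) (p : Fin n → ℝ) (k : Fin n → ℕ) :
    ∑ α ∈ Q.support, ∑ β ∈ Q.support, Q.coeff α * Q.coeff β *
        (((∏ i, (α i).choose (k i) * (β i).choose (k i) * (k i).factorial : ℕ) : ℝ) *
          (N.descFactorial (∑ i, (α i + β i - k i)) * ∏ i, p i ^ (α i + β i - k i))) =
      N.descFactorial (2 * d - ∑ i, k i) * (∏ i, p i ^ k i) * eval p (iterPderiv k Q) ^ 2 /
        ∏ i, ((k i).factorial : ℝ) := by
  rw [eq_div_iff (prod_ne_zero_iff.mpr fun i _ => Nat.cast_ne_zero.mpr (Nat.factorial_ne_zero _)),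
    eval_iterPderiv, sq, sum_mul_sum, mul_sum, sum_mul]
  refine sum_congr rfl fun α hα => ?_
  rw [mul_sum, sum_mul]
  refine sum_congr rfl fun β hβ => ?_
  linear_combination Q.coeff α * Q.coeff β * factorial_mul_weight_mul_moment_eq N d p α β k
    (hQ.sum_eq_of_mem_support hα) (hQ.sum_eq_of_mem_support hβ)

theorem factorial_sq_div_mul_descFactorial_eq_ite {n d : ℕ} {Q : MvPolynomial (Fin n) ℝ}
    (hQ : Q.IsHomogeneous d) (N : ℕ) (p : Fin n → ℝ) (t : Fin n → ℕ) :
    ((N - d).factorial / N.factorial : ℝ) ^ 2 *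
        (N.descFactorial (2 * d - ∑ i, t i) * (∏ i, p i ^ t i) *
          MvPolynomial.eval p (iterPderiv t Q) ^ 2 / ∏ i, ((t i).factorial : ℝ)) =
      if 2 * d - N ≤ ∑ i, t i ∧ ∑ i, t i ≤ d then
        (∏ i, p i ^ t i) * MvPolynomial.eval p (iterPderiv t Q) ^ 2 *
          ((N - d).factorial : ℝ) ^ 2 /
          ((N.factorial : ℝ) * ((N + ∑ i, t i - 2 * d).factorial : ℝ) *
            ∏ i, ((t i).factorial : ℝ))
      else 0 := by
  by_cases hd : ∑ i, t i ≤ d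
  · by_cases hN : 2 * d - N ≤ ∑ i, t i
    · have hfac := Nat.factorial_mul_descFactorial (show 2 * d - ∑ i, t i ≤ N by omega)
      rw [show N - (2 * d - ∑ i, t i) = N + ∑ i, t i - 2 * d by omega] at hfac
      rw [if_pos ⟨hN, hd⟩, ← hfac]
      have : (∏ i, ((t i).factorial : ℝ)) ≠ 0 :=
        prod_ne_zero_iff.mpr fun i _ => Nat.cast_ne_zero.mpr (Nat.factorial_ne_zero _)
      push_cast
      field_simp
    · rw [if_neg fun h => hN h.1, Nat.descFactorial_eq_zero_iff_lt.mpr (by omega)]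
      simp
  · rw [if_neg fun h => hd h.2, eval_iterPderiv_eq_zero_of_lt hQ t (not_le.mp hd)]
    simp

theorem stmt14_general {n : ℕ} (d N : ℕ)
    (Q : MvPolynomial (Fin n) ℝ) (hQ : Q.IsHomogeneous d)
    (p : Fin n → ℝ) (hp1 : ∑ i, p i = 1) :
    ∑ s : Fin N → Fin n, (∏ j, p (s j)) * (estU N d Q (fingerprint s)) ^ 2
    = ∑ t : Fin n → Fin (d + 1),
        if 2 * d - N ≤ ∑ i, (t i : ℕ) ∧ ∑ i, (t i : ℕ) ≤ d then
          (∏ i, p i ^ (t i : ℕ)) *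
            (MvPolynomial.eval p (iterPderiv (fun i => (t i : ℕ)) Q)) ^ 2 *
            ((N - d).factorial : ℝ) ^ 2 /
            ((N.factorial : ℝ) * ((N + ∑ i, (t i : ℕ) - 2 * d).factorial : ℝ) *
              ∏ i, (((t i : ℕ)).factorial : ℝ))
        else 0 := by
  have hle : ∀ α ∈ Q.support, ∀ i, α i ≤ d := fun α hα i =>
    hQ.sum_eq_of_mem_support hα ▸
      single_le_sum (fun j _ => Nat.zero_le (α j)) (mem_univ i)
  rw [sum_mul_estU_sq]
  calc _ = ((N - d).factorial / N.factorial : ℝ) ^ 2 * ∑ α ∈ Q.support, ∑ β ∈ Q.support,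
        Q.coeff α * Q.coeff β * ∑ t : Fin n → Fin (d + 1),
          ((∏ i, (α i).choose (t i) * (β i).choose (t i) * (t i : ℕ).factorial : ℕ) : ℝ) *
            (N.descFactorial (∑ i, (α i + β i - t i)) * ∏ i, p i ^ (α i + β i - t i)) := by
        refine congrArg _ (sum_congr rfl fun α hα => sum_congr rfl fun β _ => ?_)
        rw [sum_mul_prod_descFactorial_mul_prod_descFactorial_fingerprint p hp1 N d α β (hle α hα)]
    _ = ∑ t : Fin n → Fin (d + 1), ((N - d).factorial / N.factorial : ℝ) ^ 2 *
          ∑ α ∈ Q.support, ∑ β ∈ Q.support, Q.coeff α * Q.coeff β *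
            (((∏ i, (α i).choose (t i) * (β i).choose (t i) * (t i : ℕ).factorial : ℕ) : ℝ) *
              (N.descFactorial (∑ i, (α i + β i - t i)) * ∏ i, p i ^ (α i + β i - t i))) := by
        simp only [mul_sum]
        exact (sum_congr rfl fun α _ => sum_comm).trans sum_comm
    _ = _ := sum_congr rfl fun t _ => by
        rw [sum_sum_coeff_mul_coeff_mul_moment hQ, factorial_sq_div_mul_descFactorial_eq_ite hQ]

theorem stmt14 {n : ℕ} (d N : ℕ) (hN : d ≤ N)
    (Q : MvPolynomial (Fin n) ℝ) (hQ : Q.IsHomogeneous d)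
    (p : Fin n → ℝ) (hp0 : ∀ i, 0 ≤ p i) (hp1 : ∑ i, p i = 1) :
    ∑ s : Fin N → Fin n, (∏ j, p (s j)) * (estU N d Q (fingerprint s)) ^ 2
    = ∑ t : Fin n → Fin (d + 1),
        if 2 * d - N ≤ ∑ i, (t i : ℕ) ∧ ∑ i, (t i : ℕ) ≤ d then
          (∏ i, p i ^ (t i : ℕ)) *
            (MvPolynomial.eval p (iterPderiv (fun i => (t i : ℕ)) Q)) ^ 2 *
            ((N - d).factorial : ℝ) ^ 2 /
            ((N.factorial : ℝ) * ((N + ∑ i, (t i : ℕ) - 2 * d).factorial : ℝ) *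
              ∏ i, (((t i : ℕ)).factorial : ℝ))
        else 0 :=
  stmt14_general d N Q hQ p hp1
end
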